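/- Fix an expectile index τ ∈ (0,1). Let (ε_i)_{i≥1} be i.i.d. real random variables and let (X_i)_{i≥1} ⊂ ℝ^p be deterministic vectors satisfying (A1): ‖X_i‖₂ ≤ C₀ for all i, and (A2): Ω_n := n⁻¹·Σ_{i=1}^n X_iX_iᵀ converges, as n → ∞, to a p×p matrix Ω. Then the random matrices m^{−1}·Σ_{i=1}^m h_τ(ε_i)·X_iX_iᵀ converge in probability, entry by entry, to μ_h·Ω as m → ∞, where μ_h := E[h_τ(ε)]. -/

import Mathlib

open MeasureTheory ProbabilityTheory Filter
open scoped ProbabilityTheory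

/-- `h_τ(x) = 2τ·1_{x≥0} + 2(1−τ)·1_{x<0}`. -/
noncomputable def hFun (τ x : ℝ) : ℝ := if 0 ≤ x then 2 * τ else 2 * (1 - τ)

/-- Euclidean (`ℓ²`) norm on `ℝ^p`. -/
noncomputable def norm2 {p : ℕ} (v : Fin p → ℝ) : ℝ := Real.sqrt (∑ j, v j ^ 2)

/-! The weighted averages `n⁻¹ Σ_{i ≤ n} a_i Y_i` of independent variables with a common mean `m`,
bounded variances and bounded weights have mean `m · n⁻¹ Σ_{i ≤ n} a_i` and variance `O(1/n)`,
so by Chebyshev's inequality they converge in probability to `m c` as soon as the averages of the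
weights converge to `c`. For the theorem, `Y_i = h_τ(ε_i)` and `a_i = X_{ij} X_{il}`. -/

lemma hFun_measurable (τ : ℝ) : Measurable (hFun τ) :=
  Measurable.ite measurableSet_Ici measurable_const measurable_const

lemma abs_hFun_le (τ x : ℝ) : |hFun τ x| ≤ |2 * τ| + |2 * (1 - τ)| := by
  unfold hFun
  split <;> linarith [abs_nonneg (2 * τ), abs_nonneg (2 * (1 - τ))]

lemma abs_le_norm2 {p : ℕ} (v : Fin p → ℝ) (k : Fin p) : |v k| ≤ norm2 v := by
  rw [norm2, ← Real.sqrt_sq_eq_abs]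
  exact Real.sqrt_le_sqrt (Finset.single_le_sum (f := fun j => v j ^ 2)
    (fun j _ => sq_nonneg _) (Finset.mem_univ k))

section WeightedAverage

variable {Ω : Type*} [MeasurableSpace Ω] {μ : Measure Ω}

theorem tendstoInMeasure_const_of_tendsto_variance [IsFiniteMeasure μ] {S : ℕ → Ω → ℝ} {c : ℝ}
    (hS : ∀ n, MemLp (S n) 2 μ) (hmean : Tendsto (fun n => μ[S n]) atTop (nhds c))
    (hvar : Tendsto (fun n => variance (S n) μ) atTop (nhds 0)) :
    TendstoInMeasure μ S atTop (fun _ => c) := by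
  rw [tendstoInMeasure_iff_dist]
  intro δ hδ
  have hChebyshev : Tendsto (fun n => ENNReal.ofReal (variance (S n) μ / (δ / 2) ^ 2))
      atTop (nhds 0) := by
    simpa using ENNReal.tendsto_ofReal (hvar.div_const ((δ / 2) ^ 2))
  refine tendsto_of_tendsto_of_tendsto_of_le_of_le' tendsto_const_nhds hChebyshev
    (Eventually.of_forall fun _ => zero_le) ?_
  filter_upwards [hmean.eventually (Metric.ball_mem_nhds c (half_pos hδ))] with n hn
  calc μ {ω | δ ≤ dist (S n ω) c} ≤ μ {ω | δ / 2 ≤ |S n ω - μ[S n]|} := by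
        refine measure_mono fun ω hω => ?_
        simp only [Set.mem_ofPred_eq, Real.dist_eq] at hω hn ⊢
        linarith [abs_sub_le (S n ω) μ[S n] c]
    _ ≤ _ := meas_ge_le_variance_div_sq (hS n) (half_pos hδ)

theorem variance_sum_mul_le {ι : Type*} {Y : ι → Ω → ℝ} (hY : ∀ i, MemLp (Y i) 2 μ)
    (hindep : Pairwise fun i k => IndepFun (Y i) (Y k) μ) {V : ℝ}
    (hV : ∀ i, variance (Y i) μ ≤ V) {a : ι → ℝ} {A : ℝ} (ha : ∀ i, |a i| ≤ A)
    (s : Finset ι) :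
    variance (fun ω => ∑ i ∈ s, Y i ω * a i) μ ≤ s.card * (A ^ 2 * V) := by
  have hsum : (fun ω => ∑ i ∈ s, Y i ω * a i) = ∑ i ∈ s, a i • Y i := by
    ext ω
    simp [mul_comm]
  have hterm : ∀ i, variance (a i • Y i) μ ≤ A ^ 2 * V := fun i => by
    rw [variance_smul]
    have hai : a i ^ 2 ≤ A ^ 2 := sq_abs (a i) ▸ pow_le_pow_left₀ (abs_nonneg _) (ha i) 2
    exact mul_le_mul hai (hV i) (variance_nonneg _ _) (sq_nonneg A)
  rw [hsum, IndepFun.variance_sum (fun i _ => (hY i).const_smul (a i))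
    (fun i _ k _ hik => (hindep hik).comp (measurable_const_mul _) (measurable_const_mul _))]
  simpa using Finset.sum_le_card_nsmul s _ _ fun i _ => hterm i

theorem tendstoInMeasure_weighted_average [IsFiniteMeasure μ] {Y : ℕ → Ω → ℝ}
    (hY : ∀ i, MemLp (Y i) 2 μ) (hindep : Pairwise fun i k => IndepFun (Y i) (Y k) μ)
    {m : ℝ} (hmean : ∀ i, μ[Y i] = m) {V : ℝ} (hV : ∀ i, variance (Y i) μ ≤ V)
    {a : ℕ → ℝ} {A : ℝ} (ha : ∀ i, |a i| ≤ A) {c : ℝ}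
    (hc : Tendsto (fun n : ℕ => (n : ℝ)⁻¹ * ∑ i ∈ Finset.Icc 1 n, a i) atTop (nhds c)) :
    TendstoInMeasure μ (fun (n : ℕ) ω => (n : ℝ)⁻¹ * ∑ i ∈ Finset.Icc 1 n, Y i ω * a i)
      atTop (fun _ => m * c) := by
  refine tendstoInMeasure_const_of_tendsto_variance
    (fun n => (memLp_finsetSum _ fun i _ => (hY i).mul_const (a i)).const_mul _) ?_ ?_
  · have hint : ∀ n, ∀ i ∈ Finset.Icc 1 n, Integrable (fun ω => Y i ω * a i) μ :=
      fun n i _ => ((hY i).integrable one_le_two).mul_const (a i)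
    refine (hc.const_mul m).congr fun n => ?_
    rw [integral_const_mul, integral_finsetSum _ (hint n), Finset.mul_sum, Finset.mul_sum,
      Finset.mul_sum]
    refine Finset.sum_congr rfl fun i _ => ?_
    rw [integral_mul_const, hmean i]
    ring
  · have hbound : ∀ᶠ n : ℕ in atTop,
        variance (fun ω => (n : ℝ)⁻¹ * ∑ i ∈ Finset.Icc 1 n, Y i ω * a i) μ
          ≤ A ^ 2 * V / n := by
      filter_upwards [eventually_ge_atTop 1] with n hn
      have hn : (n : ℝ) ≠ 0 := by positivity
      calc _ = ((n : ℝ)⁻¹) ^ 2 * variance (fun ω => ∑ i ∈ Finset.Icc 1 n, Y i ω * a i) μ :=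
            variance_const_mul _ _ _
        _ ≤ ((n : ℝ)⁻¹) ^ 2 * (n * (A ^ 2 * V)) := by
            gcongr
            simpa using variance_sum_mul_le hY hindep hV ha (Finset.Icc 1 n)
        _ = A ^ 2 * V / n := by field_simp
    exact tendsto_of_tendsto_of_tendsto_of_le_of_le' tendsto_const_nhds
      (tendsto_const_div_atTop_nhds_zero_nat _)
      (Eventually.of_forall fun _ => variance_nonneg _ _) hbound

end WeightedAverage

theorem stmt12_general {Ω : Type*} [MeasureSpace Ω] [IsProbabilityMeasure (ℙ : Measure Ω)]
    (τ : ℝ) (p : ℕ)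
    -- i.i.d. errors
    (ε : ℕ → Ω → ℝ) (hmeas : ∀ i, Measurable (ε i))
    (hindep : iIndepFun ε ℙ)
    (hident : ∀ i, Measure.map (ε i) ℙ = Measure.map (ε 0) ℙ)
    -- (A1)
    (C₀ : ℝ) (X : ℕ → Fin p → ℝ) (hX : ∀ i, norm2 (X i) ≤ C₀)
    -- (A2): entrywise convergence of `Ω_n` to `Ω`
    (Ωmat : Matrix (Fin p) (Fin p) ℝ)
    (hΩ : ∀ j l, Tendsto (fun n : ℕ => (n : ℝ)⁻¹ * ∑ i ∈ Finset.Icc 1 n, X i j * X i l)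
      atTop (nhds (Ωmat j l))) :
    -- entrywise convergence in probability of `m⁻¹ Σ h_τ(ε_i) X_i X_iᵀ` to `μ_h·Ω`
    ∀ j l : Fin p, ∀ δ > (0 : ℝ),
      Tendsto (fun m : ℕ =>
        ℙ {ω | δ < |(m : ℝ)⁻¹ * (∑ i ∈ Finset.Icc 1 m, hFun τ (ε i ω) * (X i j * X i l))
            - (∫ ω', hFun τ (ε 0 ω')) * Ωmat j l|})
        atTop (nhds 0) := by
  intro j l δ hδ
  have hdistrib : ∀ i, IdentDistrib (hFun τ ∘ ε i) (hFun τ ∘ ε 0) :=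
    fun i => (IdentDistrib.mk (hmeas i).aemeasurable (hmeas 0).aemeasurable (hident i)).comp
      (hFun_measurable τ)
  have hLp : ∀ i, MemLp (hFun τ ∘ ε i) 2 :=
    fun i => MemLp.of_bound ((hFun_measurable τ).comp (hmeas i)).aestronglyMeasurable _
      (Eventually.of_forall fun ω => abs_hFun_le τ (ε i ω))
  have hweights : ∀ i, |X i j * X i l| ≤ C₀ ^ 2 := fun i => by
    rw [abs_mul, sq]
    exact mul_le_mul ((abs_le_norm2 _ _).trans (hX i)) ((abs_le_norm2 _ _).trans (hX i))
      (abs_nonneg _) ((abs_nonneg _).trans ((abs_le_norm2 _ j).trans (hX i)))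
  have hconv := tendstoInMeasure_weighted_average hLp
    (fun i k hik => (hindep.indepFun hik).comp (hFun_measurable τ) (hFun_measurable τ))
    (fun i => (hdistrib i).integral_eq) (fun i => (hdistrib i).variance_eq.le) hweights (hΩ j l)
  rw [tendstoInMeasure_iff_dist] at hconv
  refine tendsto_of_tendsto_of_tendsto_of_le_of_le tendsto_const_nhds (hconv δ hδ)
    (fun _ => zero_le) fun m => measure_mono fun ω hω => ?_
  simp only [Set.mem_ofPred_eq, Function.comp_apply, Real.dist_eq] at hω ⊢
  exact hω.le

theorem stmt12 {Ω : Type*} [MeasureSpace Ω] [IsProbabilityMeasure (ℙ : Measure Ω)]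
    (τ : ℝ) (hτ : τ ∈ Set.Ioo (0 : ℝ) 1) (p : ℕ) (hp : 1 ≤ p)
    -- i.i.d. errors
    (ε : ℕ → Ω → ℝ) (hmeas : ∀ i, Measurable (ε i))
    (hindep : iIndepFun ε ℙ)
    (hident : ∀ i, Measure.map (ε i) ℙ = Measure.map (ε 0) ℙ)
    -- (A1)
    (C₀ : ℝ) (hC₀ : 0 < C₀) (X : ℕ → Fin p → ℝ) (hX : ∀ i, norm2 (X i) ≤ C₀)
    -- (A2): entrywise convergence of `Ω_n` to `Ω`
    (Ωmat : Matrix (Fin p) (Fin p) ℝ)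
    (hΩ : ∀ j l, Tendsto (fun n : ℕ => (n : ℝ)⁻¹ * ∑ i ∈ Finset.Icc 1 n, X i j * X i l)
      atTop (nhds (Ωmat j l))) :
    -- entrywise convergence in probability of `m⁻¹ Σ h_τ(ε_i) X_i X_iᵀ` to `μ_h·Ω`
    ∀ j l : Fin p, ∀ δ > (0 : ℝ),
      Tendsto (fun m : ℕ =>
        ℙ {ω | δ < |(m : ℝ)⁻¹ * (∑ i ∈ Finset.Icc 1 m, hFun τ (ε i ω) * (X i j * X i l))
            - (∫ ω', hFun τ (ε 0 ω')) * Ωmat j l|})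
        atTop (nhds 0) :=
  stmt12_general τ p ε hmeas hindep hident C₀ X hX Ωmat hΩ
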